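/- Let x be supported on T, T^k an estimated support with ℓ = |T ∩ T^k|, |T|=K, |T^k|=Lk, and suppose δ_{K+Lk−ℓ} < 1. Then ‖Φ'_{T∖T^k} P^⊥_{T^k} Φ x‖₂ ≥ (1 − δ_{K+Lk−ℓ}) ‖x_{T∖T^k}‖₂. -/

import Mathlib

/-!
Put `A = T ∖ Tᵏ` and `u = P⊥_{Tᵏ} Φ x`. The RIP makes `Φ_{Tᵏ}` injective, so `P⊥_{Tᵏ}` is
the genuine orthogonal projection. Since `P⊥_{Tᵏ}` annihilates the columns of `Φ_{Tᵏ}`,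
`u = P⊥_{Tᵏ} Φ_A x_A = Φ w` with `w = x_A - Φ_{Tᵏ}^† Φ_A x_A` supported on `A ∪ Tᵏ`, a set of
`K + Lk - ℓ` indices, and `w` agrees with `x_A` on `A`; so the RIP gives
`‖u‖² ≥ (1 - δ) ‖x_A‖²`. As `P⊥_{Tᵏ}` is a symmetric idempotent, `‖u‖² = ⟨Φ_A' u, x_A⟩`, and
Cauchy–Schwarz turns this into the claimed bound on `‖Φ_A' u‖`.
-/

open Finset Matrix

/-- Squared-entries `ℓ₂` norm of a finite real vector. -/
noncomputable def l2 {ι : Type*} [Fintype ι] (x : ι → ℝ) : ℝ :=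
  Real.sqrt (∑ i, x i ^ 2)

/-- A vector is `K`-sparse if it has at most `K` nonzero entries. -/
def Ksparse {n : ℕ} (K : ℕ) (x : Fin n → ℝ) : Prop :=
  (Finset.univ.filter (fun i => x i ≠ 0)).card ≤ K

/-- `δ` is a valid restricted isometry constant of order `K` for `Φ`. -/
def RIP {m n : ℕ} (Φ : Matrix (Fin m) (Fin n) ℝ) (K : ℕ) (δ : ℝ) : Prop :=
  ∀ x : Fin n → ℝ, Ksparse K x →
    (1 - δ) * ∑ i, x i ^ 2 ≤ ∑ i, (Φ.mulVec x) i ^ 2 ∧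
    ∑ i, (Φ.mulVec x) i ^ 2 ≤ (1 + δ) * ∑ i, x i ^ 2

/-- Column submatrix `Φ_S`. -/
def colSub {m n : ℕ} (Φ : Matrix (Fin m) (Fin n) ℝ) (S : Finset (Fin n)) :
    Matrix (Fin m) S ℝ := fun r c => Φ r c

/-- Gram matrix `Φ_S' Φ_S`. -/
noncomputable def gram {m n : ℕ} (Φ : Matrix (Fin m) (Fin n) ℝ) (S : Finset (Fin n)) :
    Matrix S S ℝ := (colSub Φ S)ᵀ * colSub Φ S

/-- Pseudoinverse `Φ_S^† = (Φ_S'Φ_S)⁻¹ Φ_S'` (for `Φ_S` of full column rank). -/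
noncomputable def pinv {m n : ℕ} (Φ : Matrix (Fin m) (Fin n) ℝ) (S : Finset (Fin n)) :
    Matrix S (Fin m) ℝ := (gram Φ S)⁻¹ * (colSub Φ S)ᵀ

/-- Projection `P_S = Φ_S Φ_S^†` onto the span of the columns of `Φ_S`. -/
noncomputable def proj {m n : ℕ} (Φ : Matrix (Fin m) (Fin n) ℝ) (S : Finset (Fin n)) :
    Matrix (Fin m) (Fin m) ℝ := colSub Φ S * pinv Φ S

/-- Projection `P_S^⊥ = I - P_S`. -/
noncomputable def projPerp {m n : ℕ} (Φ : Matrix (Fin m) (Fin n) ℝ) (S : Finset (Fin n)) :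
    Matrix (Fin m) (Fin m) ℝ := 1 - proj Φ S


section ExtendByZero

variable {α : Type*} [DecidableEq α] (S : Finset α) (v : S → ℝ)

def extendByZero : α → ℝ :=
  fun i => if h : i ∈ S then v ⟨i, h⟩ else 0

variable {S v}

lemma extendByZero_apply_of_mem {i : α} (h : i ∈ S) : extendByZero S v i = v ⟨i, h⟩ :=
  dif_pos h

@[simp]
lemma extendByZero_apply_coe (j : S) : extendByZero S v j = v j := by
  simp [extendByZero]

@[simp]
lemma extendByZero_apply_of_notMem {i : α} (h : i ∉ S) : extendByZero S v i = 0 :=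
  dif_neg h

lemma sum_extendByZero [Fintype α] (g : α → ℝ → ℝ) (hg : ∀ i, g i 0 = 0) :
    ∑ i, g i (extendByZero S v i) = ∑ j : S, g j (v j) := by
  rw [← Finset.sum_subset (Finset.subset_univ S) fun i _ hi => by simp [hi, hg],
    ← Finset.sum_coe_sort S]
  simp

end ExtendByZero

lemma sum_sq_extendByZero {α : Type*} [DecidableEq α] [Fintype α] (S : Finset α) (v : S → ℝ) :
    ∑ i, extendByZero S v i ^ 2 = ∑ j : S, v j ^ 2 :=
  sum_extendByZero (fun _ t => t ^ 2) fun _ => zero_pow two_ne_zero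

lemma mulVec_extendByZero {m n : ℕ} (Φ : Matrix (Fin m) (Fin n) ℝ) (S : Finset (Fin n))
    (v : S → ℝ) : Φ *ᵥ extendByZero S v = colSub Φ S *ᵥ v := by
  funext r
  exact sum_extendByZero (fun i t => Φ r i * t) fun _ => mul_zero _

lemma mul_l2_le_l2_of_le_dotProduct {ι : Type*} [Fintype ι] {c : ℝ} {v y : ι → ℝ}
    (h : c * ∑ i, v i ^ 2 ≤ v ⬝ᵥ y) : c * l2 v ≤ l2 y := by
  have hcs : v ⬝ᵥ y ≤ l2 v * l2 y := by
    simpa [dotProduct, l2] using Real.sum_mul_le_sqrt_mul_sqrt Finset.univ v y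
  have hsq : l2 v * l2 v = ∑ i, v i ^ 2 :=
    Real.mul_self_sqrt (Finset.sum_nonneg fun i _ => sq_nonneg (v i))
  rcases (show 0 ≤ l2 v from Real.sqrt_nonneg _).eq_or_lt with hv | hv
  · rw [← hv, mul_zero]; exact Real.sqrt_nonneg _
  · refine le_of_mul_le_mul_right ?_ hv
    calc c * l2 v * l2 v = c * ∑ i, v i ^ 2 := by rw [mul_assoc, hsq]
      _ ≤ l2 v * l2 y := h.trans hcs
      _ = l2 y * l2 v := mul_comm _ _

section Projection

variable {m n : ℕ} (Φ : Matrix (Fin m) (Fin n) ℝ) {S : Finset (Fin n)}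

lemma isUnit_det_gram (h : Function.Injective (colSub Φ S).mulVec) : IsUnit (gram Φ S).det := by
  have hpd := Matrix.PosDef.conjTranspose_mul_self _ h
  rw [conjTranspose_eq_transpose_of_trivial] at hpd
  exact (Matrix.isUnit_iff_isUnit_det _).1 hpd.isUnit

lemma proj_transpose : (proj Φ S)ᵀ = proj Φ S := by
  have hG : (gram Φ S)ᵀ = gram Φ S := by simp [_root_.gram, Matrix.transpose_mul]
  simp only [proj, pinv, Matrix.transpose_mul, Matrix.transpose_transpose,
    Matrix.transpose_nonsing_inv, hG, Matrix.mul_assoc]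

variable {Φ} (hG : IsUnit (gram Φ S).det)
include hG

lemma proj_mul_colSub : proj Φ S * colSub Φ S = colSub Φ S := by
  rw [proj, pinv, Matrix.mul_assoc, Matrix.mul_assoc, ← _root_.gram, Matrix.nonsing_inv_mul _ hG,
    Matrix.mul_one]

lemma proj_mul_self : proj Φ S * proj Φ S = proj Φ S := by
  change proj Φ S * (colSub Φ S * pinv Φ S) = _
  rw [← Matrix.mul_assoc, proj_mul_colSub hG]
  rfl

lemma projPerp_mul_colSub : projPerp Φ S * colSub Φ S = 0 := by
  rw [projPerp, Matrix.sub_mul, proj_mul_colSub hG, Matrix.one_mul, sub_self]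

lemma dotProduct_projPerp_mulVec (y : Fin m → ℝ) :
    y ⬝ᵥ (projPerp Φ S *ᵥ y) = ∑ i, (projPerp Φ S *ᵥ y) i ^ 2 := by
  have hQ : (projPerp Φ S)ᵀ * projPerp Φ S = projPerp Φ S := by
    simp only [projPerp, Matrix.transpose_sub, Matrix.transpose_one, proj_transpose,
      Matrix.sub_mul, Matrix.mul_sub, Matrix.one_mul, Matrix.mul_one, proj_mul_self hG]
    abel
  conv_lhs => rw [← hQ]
  rw [← Matrix.mulVec_mulVec, Matrix.dotProduct_mulVec, ← Matrix.mulVec_transpose,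
    Matrix.transpose_transpose]
  simp [dotProduct, sq]

lemma projPerp_mulVec_mulVec_of_support {T : Finset (Fin n)} {x : Fin n → ℝ}
    (hx : ∀ i ∉ T, x i = 0) :
    projPerp Φ S *ᵥ (Φ *ᵥ x) = projPerp Φ S *ᵥ (colSub Φ (T \ S) *ᵥ fun j => x j) := by
  have hsplit : x = extendByZero (T \ S) (fun j => x j) + extendByZero S (fun j => x j) := by
    funext i
    by_cases hiS : i ∈ S
    · simp [extendByZero_apply_of_mem hiS, hiS]
    by_cases hiT : i ∈ T
    · simp [extendByZero_apply_of_mem (Finset.mem_sdiff.2 ⟨hiT, hiS⟩), hiS]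
    · simp [hiS, hiT, hx i hiT]
  have hΦx : Φ *ᵥ x = colSub Φ (T \ S) *ᵥ (fun j => x j) + colSub Φ S *ᵥ (fun j => x j) := by
    conv_lhs => rw [hsplit]
    rw [Matrix.mulVec_add, mulVec_extendByZero, mulVec_extendByZero]
  have hkill : projPerp Φ S *ᵥ (colSub Φ S *ᵥ fun j => x j) = 0 := by
    rw [Matrix.mulVec_mulVec, projPerp_mul_colSub hG, Matrix.zero_mulVec]
  rw [hΦx, Matrix.mulVec_add, hkill, add_zero]

end Projection

namespace RIP

variable {m n s : ℕ} {Φ : Matrix (Fin m) (Fin n) ℝ} {δ : ℝ} (hΦ : RIP Φ s δ)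
include hΦ

lemma lower_of_support_subset {U : Finset (Fin n)} (hU : U.card ≤ s) {w : Fin n → ℝ}
    (hw : ∀ i ∉ U, w i = 0) : (1 - δ) * ∑ i, w i ^ 2 ≤ ∑ i, (Φ *ᵥ w) i ^ 2 := by
  refine (hΦ w (le_trans (Finset.card_le_card fun i hi => ?_) hU)).1
  by_contra hiU
  exact (Finset.mem_filter.1 hi).2 (hw i hiU)

lemma lower_colSub {S : Finset (Fin n)} (hS : S.card ≤ s) (v : S → ℝ) :
    (1 - δ) * ∑ j, v j ^ 2 ≤ ∑ i, (colSub Φ S *ᵥ v) i ^ 2 := by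
  rw [← sum_sq_extendByZero, ← mulVec_extendByZero]
  exact hΦ.lower_of_support_subset hS fun i hi => extendByZero_apply_of_notMem hi

lemma injective_colSub (hδ : δ < 1) {S : Finset (Fin n)} (hS : S.card ≤ s) :
    Function.Injective (colSub Φ S).mulVec := by
  intro v v' hvv'
  have hzero : colSub Φ S *ᵥ (v - v') = 0 := by rw [Matrix.mulVec_sub, hvv', sub_self]
  have hle := hΦ.lower_colSub hS (v - v')
  simp only [hzero, Pi.zero_apply, zero_pow two_ne_zero, Finset.sum_const_zero] at hle
  have hsum : ∑ j, (v - v') j ^ 2 = 0 :=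
    le_antisymm (nonpos_of_mul_nonpos_right hle (sub_pos.2 hδ))
      (Finset.sum_nonneg fun j _ => sq_nonneg _)
  funext j
  simpa [sub_eq_zero] using
    (Finset.sum_eq_zero_iff_of_nonneg fun j _ => sq_nonneg ((v - v') j)).1 hsum j (mem_univ j)

lemma lower_projPerp_colSub (hδ : δ < 1) {A S : Finset (Fin n)} (hAS : Disjoint A S)
    (hcard : A.card + S.card ≤ s) (v : A → ℝ) :
    (1 - δ) * ∑ j, v j ^ 2 ≤ ∑ i, (projPerp Φ S *ᵥ (colSub Φ A *ᵥ v)) i ^ 2 := by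
  set z := pinv Φ S *ᵥ (colSub Φ A *ᵥ v)
  set w := extendByZero A v - extendByZero S z
  have hΦw : Φ *ᵥ w = projPerp Φ S *ᵥ (colSub Φ A *ᵥ v) := by
    rw [Matrix.mulVec_sub, mulVec_extendByZero, mulVec_extendByZero, Matrix.mulVec_mulVec,
      projPerp, Matrix.sub_mulVec, Matrix.one_mulVec, proj]
  have hw : ∀ i ∉ A ∪ S, w i = 0 := fun i hi => by
    rw [Finset.mem_union, not_or] at hi
    simp [w, hi.1, hi.2]
  have hvw : ∑ j, v j ^ 2 ≤ ∑ i, w i ^ 2 := by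
    rw [← sum_sq_extendByZero]
    refine Finset.sum_le_sum fun i _ => ?_
    by_cases hiA : i ∈ A
    · simp [w, Finset.disjoint_left.1 hAS hiA]
    · simpa [w, hiA] using sq_nonneg _
  calc (1 - δ) * ∑ j, v j ^ 2 ≤ (1 - δ) * ∑ i, w i ^ 2 :=
        mul_le_mul_of_nonneg_left hvw (sub_nonneg.2 hδ.le)
    _ ≤ _ := hΦw ▸ hΦ.lower_of_support_subset ((Finset.card_union_le A S).trans hcard) hw

end RIP

theorem residual_correlation_lower_bound_general {m n : ℕ} (Φ : Matrix (Fin m) (Fin n) ℝ)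
    (K L k : ℕ) (x : Fin n → ℝ) (T Tk : Finset (Fin n))
    (hsupp : ∀ i, i ∉ T → x i = 0) (hT : T.card = K) (hTk : Tk.card = L * k)
    (δ : ℝ) (hδ1 : δ < 1)
    (hRIP : RIP Φ (K + L * k - (T ∩ Tk).card) δ) :
    (1 - δ) * l2 (fun j : (T \ Tk : Finset (Fin n)) => x j.1) ≤
      l2 ((colSub Φ (T \ Tk))ᵀ.mulVec ((projPerp Φ Tk).mulVec (Φ.mulVec x))) := by
  have hcard : (T \ Tk).card + Tk.card ≤ K + L * k - (T ∩ Tk).card := by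
    have := Finset.card_sdiff_add_card_inter T Tk
    omega
  have hG := isUnit_det_gram Φ (hRIP.injective_colSub hδ1 (S := Tk) (by omega))
  rw [projPerp_mulVec_mulVec_of_support hG hsupp]
  refine mul_l2_le_l2_of_le_dotProduct ?_
  rw [Matrix.dotProduct_mulVec, ← Matrix.mulVec_transpose, Matrix.transpose_transpose,
    dotProduct_projPerp_mulVec hG]
  exact hRIP.lower_projPerp_colSub hδ1 Finset.sdiff_disjoint hcard _

/-- Lower bound for the residual correlation with the missing support:
`‖Φ'_{T∖Tᵏ} P⊥_{Tᵏ} Φ x‖₂ ≥ (1-δ_{K+Lk-ℓ}) ‖x_{T∖Tᵏ}‖₂`. -/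
theorem residual_correlation_lower_bound {m n : ℕ} (Φ : Matrix (Fin m) (Fin n) ℝ)
    (K L k : ℕ) (x : Fin n → ℝ) (T Tk : Finset (Fin n))
    (hsupp : ∀ i, i ∉ T → x i = 0) (hT : T.card = K) (hTk : Tk.card = L * k)
    (δ : ℝ) (hδ0 : 0 ≤ δ) (hδ1 : δ < 1)
    (hRIP : RIP Φ (K + L * k - (T ∩ Tk).card) δ) :
    (1 - δ) * l2 (fun j : (T \ Tk : Finset (Fin n)) => x j.1) ≤
      l2 ((colSub Φ (T \ Tk))ᵀ.mulVec ((projPerp Φ Tk).mulVec (Φ.mulVec x))) :=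
  residual_correlation_lower_bound_general Φ K L k x T Tk hsupp hT hTk δ hδ1 hRIP
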